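/- In the two-player interconnected contest with Tullock contest success function with parameter γ ∈ (0,1), in every Nash equilibrium both players exert positive effective effort at every battlefield (y_i^k > 0 for every i ∈ {1,2} and k ∈ B), and the equilibrium effective-effort vectors are unique: any two Nash equilibria induce the same pair (y_1, y_2) of effective-effort vectors. -/

import Mathlib

open Finset Matrix

/-- Effective effort of a player with spillover matrix `ρ` and effort vector `e`
at battlefield `k`: `y^k = e^k + ∑_{l ≠ k} ρ^{l,k} e^l`. -/
noncomputable def effY {m : ℕ} (ρ : Matrix (Fin m) (Fin m) ℝ) (e : Fin m → ℝ)
    (k : Fin m) : ℝ :=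
  e k + ∑ l ∈ Finset.univ.erase k, ρ l k * e l

/-- Tullock contest success function with parameter `γ`.  When both effective
efforts are `0` this gives `0/0 = 0`, matching the convention. -/
noncomputable def tullock (γ y₁ y₂ : ℝ) : ℝ :=
  y₁ ^ γ / (y₁ ^ γ + y₂ ^ γ)

/-- Payoff of player `i` in the interconnected contest. -/
noncomputable def payoff {m : ℕ} (γ : ℝ) (v : Fin m → ℝ) (c : Fin 2 → ℝ)
    (ρ : Fin 2 → Matrix (Fin m) (Fin m) ℝ) (e : Fin 2 → Fin m → ℝ) (i : Fin 2) : ℝ :=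
  (∑ k, v k * tullock γ (effY (ρ i) (e i) k) (effY (ρ (1 - i)) (e (1 - i)) k))
    - c i * ∑ k, e i k

/-- Pure strategy Nash equilibrium of the interconnected contest:
nonnegative efforts, and no profitable deviation to any nonnegative effort vector. -/
def IsNashEq {m : ℕ} (γ : ℝ) (v : Fin m → ℝ) (c : Fin 2 → ℝ)
    (ρ : Fin 2 → Matrix (Fin m) (Fin m) ℝ) (e : Fin 2 → Fin m → ℝ) : Prop :=
  (∀ i k, 0 ≤ e i k) ∧
  ∀ (i : Fin 2) (e' : Fin m → ℝ), (∀ k, 0 ≤ e' k) →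
    payoff γ v c ρ (Function.update e i e') i ≤ payoff γ v c ρ e i

/-- Winning probability of player `i` at battlefield `k` under profile `e`. -/
noncomputable def eqProb {m : ℕ} (γ : ℝ) (ρ : Fin 2 → Matrix (Fin m) (Fin m) ℝ)
    (e : Fin 2 → Fin m → ℝ) (i : Fin 2) (k : Fin m) : ℝ :=
  tullock γ (effY (ρ i) (e i) k) (effY (ρ (1 - i)) (e (1 - i)) k)

/-!
If a player's effective effort at some battlefield were zero, adding a small effort `ε` there
would win it with probability of order `ε ^ γ` at a cost of order `ε`; since `γ < 1` this
deviation is profitable. At positive effective efforts the payoffs are differentiable, and an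
equilibrium satisfies the first-order (variational) inequalities for the marginal values
`M y z = ∂/∂y (y ^ γ / (y ^ γ + z ^ γ))`. Adding these inequalities for both players at two
equilibria cancels the costs, while the map `(y, z) ↦ (M y z, M z y)` is strictly monotone
decreasing on the positive quadrant for `γ ≤ 1`. Hence the effective efforts coincide.
-/

open Filter Topology Set

noncomputable def tullockMarginal (γ x y : ℝ) : ℝ :=
  γ * x ^ (γ - 1) * y ^ γ / (x ^ γ + y ^ γ) ^ 2

section Tullock

variable {γ : ℝ}

lemma tullock_zero_left (hγ : 0 < γ) (z : ℝ) : tullock γ 0 z = 0 := by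
  simp [tullock, Real.zero_rpow hγ.ne']

lemma tullock_le_tullock_left (hγ : 0 < γ) {a b z : ℝ} (ha : 0 ≤ a) (hab : a ≤ b)
    (hz : 0 ≤ z) : tullock γ a z ≤ tullock γ b z := by
  have hab' : a ^ γ ≤ b ^ γ := Real.rpow_le_rpow ha hab hγ.le
  have hz' : 0 ≤ z ^ γ := Real.rpow_nonneg hz γ
  have ha' : 0 ≤ a ^ γ := Real.rpow_nonneg ha γ
  rcases (add_nonneg ha' hz').eq_or_lt with h0 | h0
  · rw [tullock, ← h0, div_zero]
    exact div_nonneg (ha'.trans hab') (add_nonneg (ha'.trans hab') hz')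
  · rw [tullock, tullock, div_le_div_iff₀ h0 (by linarith)]
    nlinarith

lemma hasDerivAt_tullock_left {x z : ℝ} (hx : 0 < x) (hz : 0 ≤ z) :
    HasDerivAt (fun x => tullock γ x z) (tullockMarginal γ x z) x := by
  have hxγ : 0 < x ^ γ := Real.rpow_pos_of_pos hx γ
  have hzγ : 0 ≤ z ^ γ := Real.rpow_nonneg hz γ
  have hnum : HasDerivAt (fun x => x ^ γ) (γ * x ^ (γ - 1)) x :=
    Real.hasDerivAt_rpow_const (Or.inl hx.ne')
  refine (hnum.div (hnum.add_const (z ^ γ))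
    (add_pos_of_pos_of_nonneg hxγ hzγ).ne').congr_deriv ?_
  rw [tullockMarginal]
  field_simp
  ring

lemma HasDerivAt.tullockMarginal {X Y : ℝ → ℝ} {X' Y' t : ℝ} (hX : HasDerivAt X X' t)
    (hY : HasDerivAt Y Y' t) (hXpos : 0 < X t) (hYpos : 0 < Y t) :
    HasDerivAt (fun s => _root_.tullockMarginal γ (X s) (Y s))
      (γ * X t ^ γ * Y t ^ γ
        * (((γ - 1) * (X t ^ γ + Y t ^ γ) - 2 * γ * X t ^ γ) * X' / X t ^ 2
          + γ * (X t ^ γ - Y t ^ γ) * Y' / (X t * Y t)) / (X t ^ γ + Y t ^ γ) ^ 3) t := by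
  have hA : HasDerivAt (fun s => X s ^ γ) (X' * γ * (X t ^ γ / X t)) t := by
    simpa only [Real.rpow_sub_one hXpos.ne'] using hX.rpow_const (p := γ) (Or.inl hXpos.ne')
  have hB : HasDerivAt (fun s => Y s ^ γ) (Y' * γ * (Y t ^ γ / Y t)) t := by
    simpa only [Real.rpow_sub_one hYpos.ne'] using hY.rpow_const (p := γ) (Or.inl hYpos.ne')
  have hAγ : 0 < X t ^ γ := Real.rpow_pos_of_pos hXpos γ
  have hBγ : 0 < Y t ^ γ := Real.rpow_pos_of_pos hYpos γ
  have hM := (((hA.fun_div hX hXpos.ne').fun_mul hB).fun_div ((hA.fun_add hB).fun_pow 2)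
    (by positivity)).const_mul γ
  have heq : (fun s => γ * (X s ^ γ / X s * Y s ^ γ / (X s ^ γ + Y s ^ γ) ^ 2))
      =ᶠ[𝓝 t] fun s => _root_.tullockMarginal γ (X s) (Y s) := by
    filter_upwards [hX.continuousAt.eventually (eventually_gt_nhds hXpos)] with s hs
    rw [_root_.tullockMarginal, Real.rpow_sub_one hs.ne']
    ring
  refine (hM.congr_of_eventuallyEq heq.symm).congr_deriv ?_
  field_simp
  ring


/-- `dᵀ J d` for the Jacobian `J` of `(x, y) ↦ (M x y, M y x)`, `M = tullockMarginal γ`;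
the mixed partial derivatives cancel. -/
noncomputable def marginalJacobianForm (γ x y dx dy : ℝ) : ℝ :=
  γ * x ^ γ * y ^ γ / (x ^ γ + y ^ γ) ^ 3 *
    (((γ - 1) * (x ^ γ + y ^ γ) - 2 * γ * x ^ γ) * dx ^ 2 / x ^ 2
      + ((γ - 1) * (x ^ γ + y ^ γ) - 2 * γ * y ^ γ) * dy ^ 2 / y ^ 2)

lemma marginalJacobianForm_neg (hγ0 : 0 < γ) (hγ1 : γ ≤ 1) {x y dx dy : ℝ} (hx : 0 < x)
    (hy : 0 < y) (hne : dx ≠ 0 ∨ dy ≠ 0) : marginalJacobianForm γ x y dx dy < 0 := by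
  have hxγ : 0 < x ^ γ := Real.rpow_pos_of_pos hx γ
  have hyγ : 0 < y ^ γ := Real.rpow_pos_of_pos hy γ
  have hcx : (γ - 1) * (x ^ γ + y ^ γ) - 2 * γ * x ^ γ < 0 := by nlinarith
  have hcy : (γ - 1) * (x ^ γ + y ^ γ) - 2 * γ * y ^ γ < 0 := by nlinarith
  have hdx : 0 ≤ dx ^ 2 / x ^ 2 := by positivity
  have hdy : 0 ≤ dy ^ 2 / y ^ 2 := by positivity
  have hd : 0 < dx ^ 2 / x ^ 2 ∨ 0 < dy ^ 2 / y ^ 2 := hne.imp (fun h => by positivity)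
    (fun h => by positivity)
  refine mul_neg_of_pos_of_neg (by positivity) ?_
  rw [mul_div_assoc, mul_div_assoc]
  rcases hd with hd | hd <;> nlinarith

lemma hasDerivAt_tullockMarginal_pairing {x y dx dy t : ℝ} (hx : 0 < x + t * dx)
    (hy : 0 < y + t * dy) :
    HasDerivAt (fun s => tullockMarginal γ (x + s * dx) (y + s * dy) * dx
        + tullockMarginal γ (y + s * dy) (x + s * dx) * dy)
      (marginalJacobianForm γ (x + t * dx) (y + t * dy) dx dy) t := by
  have hX : HasDerivAt (fun s => x + s * dx) dx t := (hasDerivAt_mul_const dx).const_add x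
  have hY : HasDerivAt (fun s => y + s * dy) dy t := (hasDerivAt_mul_const dy).const_add y
  have hxγ : 0 < (x + t * dx) ^ γ := Real.rpow_pos_of_pos hx γ
  have hyγ : 0 < (y + t * dy) ^ γ := Real.rpow_pos_of_pos hy γ
  refine (((hX.tullockMarginal hY hx hy).mul_const dx).add
    ((hY.tullockMarginal hX hy hx).mul_const dy)).congr_deriv ?_
  rw [marginalJacobianForm]
  field_simp
  ring

lemma tullockMarginal_pair_strict (hγ0 : 0 < γ) (hγ1 : γ ≤ 1) {x y x' y' : ℝ}
    (hx : 0 < x) (hy : 0 < y) (hx' : 0 < x') (hy' : 0 < y') (hne : x ≠ x' ∨ y ≠ y') :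
    (tullockMarginal γ x y - tullockMarginal γ x' y') * (x - x')
      + (tullockMarginal γ y x - tullockMarginal γ y' x') * (y - y') < 0 := by
  have hseg : ∀ t ∈ Icc (0 : ℝ) 1, 0 < x' + t * (x - x') ∧ 0 < y' + t * (y - y') :=
    fun t ht => ⟨(convex_Ioi (0 : ℝ)).add_smul_sub_mem hx' hx ht,
      (convex_Ioi (0 : ℝ)).add_smul_sub_mem hy' hy ht⟩
  have hderiv := fun t (ht : t ∈ Icc (0 : ℝ) 1) =>
    hasDerivAt_tullockMarginal_pairing (γ := γ) (hseg t ht).1 (hseg t ht).2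
  obtain ⟨t, ht, hslope⟩ := exists_hasDerivAt_eq_slope _ _ zero_lt_one
    (fun t ht => (hderiv t ht).continuousAt.continuousWithinAt)
    (fun t ht => hderiv t (Ioo_subset_Icc_self ht))
  have hneg := marginalJacobianForm_neg hγ0 hγ1 (hseg t (Ioo_subset_Icc_self ht)).1
    (hseg t (Ioo_subset_Icc_self ht)).2 (hne.imp sub_ne_zero.2 sub_ne_zero.2)
  rw [hslope] at hneg
  simp only [zero_mul, add_zero, one_mul, sub_zero, div_one, add_sub_cancel] at hneg
  linarith

end Tullock

lemma HasDerivAt.nonpos_of_isMaxOn {f : ℝ → ℝ} {D a b : ℝ} (hf : HasDerivAt f D a)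
    (hab : a < b) (hmax : IsMaxOn f (Icc a b) a) : D ≤ 0 := by
  have hseg : segment ℝ a (a + (b - a)) ⊆ Icc a b := by
    rw [segment_eq_Icc (by linarith), add_sub_cancel]
  have := hmax.localize.hasFDerivWithinAt_nonpos hf.hasFDerivAt.hasFDerivWithinAt
    (mem_posTangentConeAt_of_segment_subset hseg)
  have h : (b - a) * D ≤ 0 := by simpa using this
  exact nonpos_of_mul_nonpos_right h (sub_pos.2 hab)

section EffectiveEffort

variable {m : ℕ} (ρ : Matrix (Fin m) (Fin m) ℝ)

lemma effY_add (a b : Fin m → ℝ) (k : Fin m) :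
    effY ρ (a + b) k = effY ρ a k + effY ρ b k := by
  simp only [effY, Pi.add_apply, mul_add, Finset.sum_add_distrib]
  ring

lemma effY_smul (t : ℝ) (a : Fin m → ℝ) (k : Fin m) :
    effY ρ (t • a) k = t * effY ρ a k := by
  simp only [effY, Pi.smul_apply, smul_eq_mul, mul_add, Finset.mul_sum]
  congr 1
  exact Finset.sum_congr rfl fun l _ => by ring

lemma effY_sub (a b : Fin m → ℝ) (k : Fin m) :
    effY ρ (a - b) k = effY ρ a k - effY ρ b k := by
  rw [eq_sub_iff_add_eq, ← effY_add, sub_add_cancel]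

lemma effY_single_self (k : Fin m) (ε : ℝ) : effY ρ (Pi.single k ε) k = ε := by
  simp only [effY, Pi.single_eq_same, add_eq_left]
  exact Finset.sum_eq_zero fun l hl => by
    rw [Pi.single_eq_of_ne (Finset.ne_of_mem_erase hl), mul_zero]

variable {ρ}

lemma effY_nonneg (hρ : ∀ k l, 0 ≤ ρ k l) {e : Fin m → ℝ} (he : ∀ k, 0 ≤ e k)
    (k : Fin m) :
    0 ≤ effY ρ e k :=
  add_nonneg (he k) (Finset.sum_nonneg fun l _ => mul_nonneg (hρ l k) (he l))

lemma effY_mono (hρ : ∀ k l, 0 ≤ ρ k l) {a b : Fin m → ℝ} (hab : a ≤ b) (k : Fin m) :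
    effY ρ a k ≤ effY ρ b k := by
  simpa only [effY_sub, sub_nonneg] using
    effY_nonneg hρ (e := b - a) (fun l => sub_nonneg.2 (hab l)) k

end EffectiveEffort

section Equilibrium

variable {m : ℕ} {γ : ℝ} {v : Fin m → ℝ} {c : Fin 2 → ℝ}
  {ρ : Fin 2 → Matrix (Fin m) (Fin m) ℝ} {e e' : Fin 2 → Fin m → ℝ}

lemma Fin.one_sub_ne (i : Fin 2) : 1 - i ≠ i := by
  fin_cases i <;> decide

lemma payoff_update_self (e : Fin 2 → Fin m → ℝ) (i : Fin 2) (e' : Fin m → ℝ) :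
    payoff γ v c ρ (Function.update e i e') i
      = ∑ k, v k * tullock γ (effY (ρ i) e' k) (effY (ρ (1 - i)) (e (1 - i)) k)
        - c i * ∑ k, e' k := by
  rw [payoff, Function.update_self, Function.update_of_ne (Fin.one_sub_ne i)]

/-- The first-order condition of player `i`'s best response, tested in the direction of the
deviation `g`. -/
lemma IsNashEq.sum_marginal_mul_sub_le (he : IsNashEq γ v c ρ e) {i : Fin 2}
    (hy : ∀ k, 0 < effY (ρ i) (e i) k) (hz : ∀ k, 0 ≤ effY (ρ (1 - i)) (e (1 - i)) k)
    {g : Fin m → ℝ} (hg : ∀ k, 0 ≤ g k) :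
    ∑ k, v k * tullockMarginal γ (effY (ρ i) (e i) k) (effY (ρ (1 - i)) (e (1 - i)) k)
        * (effY (ρ i) g k - effY (ρ i) (e i) k)
      ≤ c i * (∑ k, g k - ∑ k, e i k) := by
  set y := effY (ρ i) (e i)
  set z := effY (ρ (1 - i)) (e (1 - i))
  set f : ℝ → ℝ := fun t => payoff γ v c ρ (Function.update e i (e i + t • (g - e i))) i
  have hf : f = fun t => ∑ k, v k * tullock γ (y k + t * (effY (ρ i) g k - y k)) (z k)
      - c i * ∑ k, (e i k + t * (g k - e i k)) := by
    funext t
    simp only [f, payoff_update_self, effY_add, effY_smul, effY_sub, y, z, Pi.add_apply,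
      Pi.smul_apply, Pi.sub_apply, smul_eq_mul]
  have hmax : IsMaxOn f (Icc 0 1) 0 := fun t ⟨ht0, ht1⟩ => by
    have hf0 : f 0 = payoff γ v c ρ e i := by simp [f]
    refine hf0 ▸ he.2 i _ fun k => ?_
    have := he.1 i k
    have := hg k
    simp only [Pi.add_apply, Pi.smul_apply, Pi.sub_apply, smul_eq_mul]
    nlinarith
  have hderiv : HasDerivAt f (∑ k, v k * tullockMarginal γ (y k) (z k)
      * (effY (ρ i) g k - y k) - c i * ∑ k, (g k - e i k)) 0 := by
    rw [hf]
    refine HasDerivAt.sub (HasDerivAt.fun_sum fun k _ => ?_)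
      ((HasDerivAt.fun_sum fun k _ => (hasDerivAt_mul_const _).const_add _).const_mul _)
    rw [mul_assoc]
    exact (((hasDerivAt_tullock_left (hy k) (hz k)).comp_of_eq 0
      ((hasDerivAt_mul_const _).const_add _)) (by simp)).const_mul _
  have := hderiv.nonpos_of_isMaxOn zero_lt_one hmax
  rw [Finset.sum_sub_distrib] at this
  linarith

lemma exists_pos_mul_lt_tullock (hγ0 : 0 < γ) (hγ1 : γ < 1) {a b z : ℝ} (hb : 0 < b)
    (hz : 0 ≤ z) : ∃ ε > 0, a * ε < b * tullock γ ε z := by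
  have hcont : ContinuousAt (fun ε : ℝ => a * ε ^ (1 - γ) * (ε ^ γ + z ^ γ)) 0 :=
    (continuousAt_const.mul (Real.continuousAt_rpow_const 0 _ (Or.inr (by linarith)))).mul
      ((Real.continuousAt_rpow_const 0 _ (Or.inr hγ0.le)).add continuousAt_const)
  have hlim : ∀ᶠ ε in 𝓝 (0 : ℝ), a * ε ^ (1 - γ) * (ε ^ γ + z ^ γ) < b := by
    refine hcont.eventually (eventually_lt_nhds ?_)
    simpa [Real.zero_rpow (sub_pos.2 hγ1).ne'] using hb
  obtain ⟨ε, hε, hεpos⟩ :=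
    ((hlim.filter_mono (nhdsWithin_le_nhds (s := Ioi 0))).and self_mem_nhdsWithin).exists
  refine ⟨ε, hεpos, ?_⟩
  have hεγ : 0 < ε ^ γ := Real.rpow_pos_of_pos hεpos γ
  have hsplit : ε = ε ^ (1 - γ) * ε ^ γ := by
    rw [← Real.rpow_add hεpos, sub_add_cancel, Real.rpow_one]
  rw [tullock, mul_div_assoc', lt_div_iff₀ (by positivity)]
  calc a * ε * (ε ^ γ + z ^ γ) = a * ε ^ (1 - γ) * (ε ^ γ + z ^ γ) * ε ^ γ := by
        nth_rw 1 [hsplit]; ring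
    _ < b * ε ^ γ := mul_lt_mul_of_pos_right hε hεγ

lemma IsNashEq.effY_pos (he : IsNashEq γ v c ρ e) (hγ0 : 0 < γ) (hγ1 : γ < 1)
    (hv : ∀ k, 0 < v k) (hρ : ∀ i k l, 0 ≤ ρ i k l) (i : Fin 2) (k : Fin m) :
    0 < effY (ρ i) (e i) k := by
  have hnonneg : ∀ j l, 0 ≤ effY (ρ j) (e j) l := fun j => effY_nonneg (hρ j) (he.1 j)
  refine (hnonneg i k).lt_of_ne fun hzero => ?_
  obtain ⟨ε, hε, hgain⟩ :=
    exists_pos_mul_lt_tullock hγ0 hγ1 (a := c i) (hv k) (hnonneg (1 - i) k)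
  set e' := e i + Pi.single k ε
  have hle : e i ≤ e' := le_add_of_nonneg_right (Pi.single_nonneg.2 hε.le)
  have hdev := he.2 i e' fun l => (he.1 i l).trans (hle l)
  have hcost : ∑ l, e' l = ∑ l, e i l + ε := by simp [e', Finset.sum_add_distrib]
  rw [payoff_update_self, hcost, payoff] at hdev
  have hy' : effY (ρ i) e' k = ε := by rw [effY_add, effY_single_self, ← hzero, zero_add]
  set y := effY (ρ i) (e i)
  set y' := effY (ρ i) e'
  set z := effY (ρ (1 - i)) (e (1 - i))
  have hterm : ∀ l, 0 ≤ v l * (tullock γ (y' l) (z l) - tullock γ (y l) (z l)) := fun l =>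
    mul_nonneg (hv l).le <| sub_nonneg.2 <| tullock_le_tullock_left hγ0 (hnonneg i l)
      (effY_mono (hρ i) hle l) (hnonneg _ l)
  have hk : v k * (tullock γ (y' k) (z k) - tullock γ (y k) (z k))
      = v k * tullock γ ε (z k) := by
    rw [hy', ← hzero, tullock_zero_left hγ0, sub_zero]
  have := Finset.single_le_sum (fun l _ => hterm l) (Finset.mem_univ k)
  simp only [hk, mul_sub, Finset.sum_sub_distrib] at this
  linarith

lemma IsNashEq.sum_marginal_sub_mul_sub_nonneg (he : IsNashEq γ v c ρ e)
    (he' : IsNashEq γ v c ρ e') {i : Fin 2}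
    (hy : ∀ k, 0 < effY (ρ i) (e i) k) (hz : ∀ k, 0 ≤ effY (ρ (1 - i)) (e (1 - i)) k)
    (hy' : ∀ k, 0 < effY (ρ i) (e' i) k) (hz' : ∀ k, 0 ≤ effY (ρ (1 - i)) (e' (1 - i)) k) :
    0 ≤ ∑ k, v k * (tullockMarginal γ (effY (ρ i) (e i) k) (effY (ρ (1 - i)) (e (1 - i)) k)
        - tullockMarginal γ (effY (ρ i) (e' i) k) (effY (ρ (1 - i)) (e' (1 - i)) k))
        * (effY (ρ i) (e i) k - effY (ρ i) (e' i) k) := by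
  have h := add_le_add (he.sum_marginal_mul_sub_le hy hz (he'.1 i))
    (he'.sum_marginal_mul_sub_le hy' hz' (he.1 i))
  rw [← Finset.sum_add_distrib] at h
  rw [← neg_nonpos, ← Finset.sum_neg_distrib]
  refine Eq.trans_le ?_ (h.trans_eq (by ring))
  exact Finset.sum_congr rfl fun k _ => by ring

lemma effY_eq_of_isNashEq (hγ0 : 0 < γ) (hγ1 : γ ≤ 1) (hv : ∀ k, 0 < v k)
    (he : IsNashEq γ v c ρ e) (he' : IsNashEq γ v c ρ e')
    (hpos : ∀ i k, 0 < effY (ρ i) (e i) k) (hpos' : ∀ i k, 0 < effY (ρ i) (e' i) k) :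
    ∀ i k, effY (ρ i) (e i) k = effY (ρ i) (e' i) k := by
  set y := fun i k => effY (ρ i) (e i) k
  set y' := fun i k => effY (ρ i) (e' i) k
  set q := fun k => v k *
    ((tullockMarginal γ (y 0 k) (y 1 k) - tullockMarginal γ (y' 0 k) (y' 1 k)) * (y 0 k - y' 0 k)
      + (tullockMarginal γ (y 1 k) (y 0 k) - tullockMarginal γ (y' 1 k) (y' 0 k))
        * (y 1 k - y' 1 k))
  have hq_neg : ∀ k, (y 0 k ≠ y' 0 k ∨ y 1 k ≠ y' 1 k) → q k < 0 := fun k hne =>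
    mul_neg_of_pos_of_neg (hv k) (tullockMarginal_pair_strict hγ0 hγ1 (hpos 0 k) (hpos 1 k)
      (hpos' 0 k) (hpos' 1 k) hne)
  have hq_nonpos : ∀ k ∈ Finset.univ, q k ≤ 0 := fun k _ => by
    by_cases h : y 0 k = y' 0 k ∧ y 1 k = y' 1 k
    · simp [q, h.1, h.2]
    · exact (hq_neg k (not_and_or.1 h)).le
  have hsum : 0 ≤ ∑ k, q k := by
    have h0 := he.sum_marginal_sub_mul_sub_nonneg he' (i := 0) (hpos 0) (fun k => (hpos _ k).le)
      (hpos' 0) (fun k => (hpos' _ k).le)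
    have h1 := he.sum_marginal_sub_mul_sub_nonneg he' (i := 1) (hpos 1) (fun k => (hpos _ k).le)
      (hpos' 1) (fun k => (hpos' _ k).le)
    calc 0 ≤ _ := add_nonneg h0 h1
      _ = ∑ k, q k := by
        rw [← Finset.sum_add_distrib]
        refine Finset.sum_congr rfl fun k _ => ?_
        simp only [q, y, y', show (1 : Fin 2) - 0 = 1 from rfl, show (1 : Fin 2) - 1 = 0 from rfl]
        ring
  by_contra! hne
  obtain ⟨i, k, hik⟩ := hne
  have hk : y 0 k ≠ y' 0 k ∨ y 1 k ≠ y' 1 k := by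
    fin_cases i
    exacts [Or.inl hik, Or.inr hik]
  have := Finset.sum_lt_sum hq_nonpos ⟨k, Finset.mem_univ k, hq_neg k hk⟩
  rw [Finset.sum_const_zero] at this
  linarith

end Equilibrium

theorem effective_efforts_positive_and_unique_general
    (m : ℕ) (γ : ℝ) (hγ0 : 0 < γ) (hγ1 : γ < 1)
    (v : Fin m → ℝ) (hv : ∀ k, 0 < v k)
    (c : Fin 2 → ℝ)
    (ρ : Fin 2 → Matrix (Fin m) (Fin m) ℝ)
    (hρ : ∀ i k l, 0 ≤ ρ i k l)
    (e e' : Fin 2 → Fin m → ℝ)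
    (he : IsNashEq γ v c ρ e) (he' : IsNashEq γ v c ρ e') :
    (∀ i k, 0 < effY (ρ i) (e i) k) ∧
    (∀ i k, effY (ρ i) (e i) k = effY (ρ i) (e' i) k) := by
  have hpos := he.effY_pos hγ0 hγ1 hv hρ
  have hpos' := he'.effY_pos hγ0 hγ1 hv hρ
  exact ⟨hpos, effY_eq_of_isNashEq hγ0 hγ1.le hv he he' hpos hpos'⟩

/-- for γ ∈ (0,1), in every equilibrium both players exert
positive effective effort everywhere, and equilibrium effective efforts are
unique across equilibria. -/
theorem effective_efforts_positive_and_unique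
    (m : ℕ) (γ : ℝ) (hγ0 : 0 < γ) (hγ1 : γ < 1)
    (v : Fin m → ℝ) (hv : ∀ k, 0 < v k)
    (c : Fin 2 → ℝ) (hc : ∀ i, 0 < c i)
    (ρ : Fin 2 → Matrix (Fin m) (Fin m) ℝ)
    (hρ : ∀ i k l, 0 ≤ ρ i k l) (hρd : ∀ i k, ρ i k k = 0)
    (e e' : Fin 2 → Fin m → ℝ)
    (he : IsNashEq γ v c ρ e) (he' : IsNashEq γ v c ρ e') :
    (∀ i k, 0 < effY (ρ i) (e i) k) ∧
    (∀ i k, effY (ρ i) (e i) k = effY (ρ i) (e' i) k) :=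
  effective_efforts_positive_and_unique_general m γ hγ0 hγ1 v hv c ρ hρ e e' he he'
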